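/- The determinant of the Harper matrix with ε = 0 and b = 0, namely det(h(1, 0, 0)) = det((X + Xᴴ)/2) = ∏_{j=0}^{N−1} cos(2πj/N), equals 0 if N ≡ 0 (mod 4), equals 2^(1−N) if N is odd, and equals −2^(2−N) if N ≡ 2 (mod 4). -/

import Mathlib

open Matrix Complex

/-- The primitive `N`-th root of unity `ω = exp(2πi/N)`. -/
noncomputable def omegaN (N : ℕ) : ℂ := Complex.exp (2 * (Real.pi : ℂ) * Complex.I / (N : ℂ))

/-- The clock matrix `Z` with `Z_{jk} = ω^j` if `j = k`, `0` otherwise. -/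
noncomputable def clockZ (N : ℕ) : Matrix (Fin N) (Fin N) ℂ :=
  Matrix.diagonal fun j => omegaN N ^ (j : ℕ)

/-- The shift matrix `X` with `X_{jk} = 1` if `j = k + 1 (mod N)`, `0` otherwise. -/
def shiftX (N : ℕ) : Matrix (Fin N) (Fin N) ℂ :=
  Matrix.of fun j k => if (j : ℕ) = ((k : ℕ) + 1) % N then 1 else 0

/-- The shifted Harper matrix
`h(a,b,ε) = (a/2)·e^{ib}·X + (a/2)·e^{−ib}·Xᴴ + (ε/2)·(Z + Zᴴ)`. -/
noncomputable def harper (N : ℕ) (a b ε : ℝ) : Matrix (Fin N) (Fin N) ℂ :=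
  ((a : ℂ) / 2 * Complex.exp ((b : ℂ) * Complex.I)) • shiftX N
  + ((a : ℂ) / 2 * Complex.exp (-(b : ℂ) * Complex.I)) • (shiftX N)ᴴ
  + ((ε : ℂ) / 2) • (clockZ N + (clockZ N)ᴴ)

/-- The parity matrix `P` with `P_{jk} = 1` if `j + k ≡ 0 (mod N)`, `0` otherwise. -/
def parityP (N : ℕ) : Matrix (Fin N) (Fin N) ℂ :=
  Matrix.of fun j k => if ((j : ℕ) + (k : ℕ)) % N = 0 then 1 else 0

/-- The discrete Fourier transform matrix `Q` with `Q_{jk} = ω^{jk}/√N`. -/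
noncomputable def dftQ (N : ℕ) : Matrix (Fin N) (Fin N) ℂ :=
  Matrix.of fun j k => omegaN N ^ ((j : ℕ) * (k : ℕ)) / (Real.sqrt N : ℂ)

/-! For `ε = 0` the Harper matrix is a combination of the cyclic shift `X` and its inverse `Xᴴ`,
so the Vandermonde matrix of the powers of `ω` diagonalises it, with eigenvalues
`a cos(2πk/N - b)`. For the product of the cosines write `2 cos(2πk/N) = ω^k + ω^{-k}` and
`(ω^k + ω^{-k}) ω^k = (i - ω^k)(-i - ω^k)`; since `∏ₖ (x - ω^k) = x^N - 1`, this gives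
`2^N ∏ₖ cos(2πk/N) = (-1)^(N+1) (i^N - 1)((-i)^N - 1)`, which depends only on `N mod 4`. -/

open Finset Polynomial

lemma neg_one_pow_sq {R : Type*} [Monoid R] [HasDistribNeg R] (n : ℕ) :
    ((-1 : R) ^ n) ^ 2 = 1 := by
  rw [← pow_mul, mul_comm, pow_mul, neg_one_sq, one_pow]

namespace IsPrimitiveRoot

section
variable {R : Type*} [CommRing R] [IsDomain R] {ζ : R} {n : ℕ}

lemma prod_range_sub_pow (hζ : IsPrimitiveRoot ζ n) (hn : 0 < n) (x : R) :
    ∏ i ∈ range n, (x - ζ ^ i) = x ^ n - 1 := by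
  simpa [eval_prod] using (congrArg (eval x) (X_pow_sub_C_eq_prod hζ hn (one_pow n))).symm

lemma prod_range_pow (hζ : IsPrimitiveRoot ζ n) (hn : 0 < n) :
    ∏ i ∈ range n, ζ ^ i = (-1) ^ (n + 1) := by
  have h := hζ.prod_range_sub_pow hn 0
  simp only [zero_sub, prod_neg, card_range, zero_pow hn.ne'] at h
  linear_combination (-1) ^ n * h - (∏ i ∈ range n, ζ ^ i) * neg_one_pow_sq (R := R) n

end

lemma prod_range_pow_add_inv {ζ : ℂ} {n : ℕ} (hζ : IsPrimitiveRoot ζ n) (hn : 0 < n) :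
    ∏ i ∈ range n, (ζ ^ i + (ζ ^ i)⁻¹)
      = (-1) ^ (n + 1) * ((I ^ n - 1) * ((-I) ^ n - 1)) := by
  have hfactor (i : ℕ) : (ζ ^ i + (ζ ^ i)⁻¹) * ζ ^ i = (I - ζ ^ i) * (-I - ζ ^ i) := by
    rw [add_mul, inv_mul_cancel₀ (pow_ne_zero _ (hζ.ne_zero hn.ne'))]
    linear_combination I_sq
  have key : (∏ i ∈ range n, (ζ ^ i + (ζ ^ i)⁻¹)) * (-1) ^ (n + 1)
      = (I ^ n - 1) * ((-I) ^ n - 1) := by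
    rw [← hζ.prod_range_pow hn, ← prod_mul_distrib, prod_congr rfl fun i _ => hfactor i,
      prod_mul_distrib, hζ.prod_range_sub_pow hn, hζ.prod_range_sub_pow hn]
  linear_combination (-1) ^ (n + 1) * key -
    (∏ i ∈ range n, (ζ ^ i + (ζ ^ i)⁻¹)) * neg_one_pow_sq (R := ℂ) (n + 1)

end IsPrimitiveRoot

lemma neg_one_pow_succ_mul_I_pow_sub_one_mul_neg_I_pow_sub_one (n : ℕ) :
    (-1 : ℂ) ^ (n + 1) * ((I ^ n - 1) * ((-I) ^ n - 1))
      = if n % 4 = 0 then 0 else if n % 2 = 1 then 2 else -4 := by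
  obtain ⟨q, r, hr, rfl⟩ : ∃ q r, r < 4 ∧ n = r + 4 * q :=
    ⟨n / 4, n % 4, n.mod_lt (by norm_num), by omega⟩
  have hperiod {z : ℂ} (hz : z ^ 4 = 1) (s : ℕ) : z ^ (s + 4 * q) = z ^ s := by
    rw [pow_add, pow_mul, hz, one_pow, mul_one]
  rw [add_right_comm, hperiod (by norm_num) (r + 1), hperiod I_pow_four,
    hperiod (by rw [neg_pow, I_pow_four]; norm_num), show (r + 4 * q) % 4 = r by omega,
    show (r + 4 * q) % 2 = r % 2 by omega]
  interval_cases r <;> simp [pow_succ, Complex.ext_iff] <;> norm_num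

lemma Complex.exp_mul_I_add_inv (x : ℝ) :
    exp (x * I) + (exp (x * I))⁻¹ = 2 * Real.cos x := by
  rw [← exp_neg, ofReal_cos, two_cos, neg_mul]

lemma omegaN_pow (N k : ℕ) : omegaN N ^ k = exp (↑(2 * Real.pi * k / N) * I) := by
  rw [omegaN, ← exp_nat_mul]
  push_cast
  ring_nf

lemma isPrimitiveRoot_omegaN (N : ℕ) [NeZero N] : IsPrimitiveRoot (omegaN N) N :=
  Complex.isPrimitiveRoot_exp N (NeZero.ne N)

theorem two_pow_mul_prod_cos_two_pi_mul_div (N : ℕ) [NeZero N] :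
    (2 : ℂ) ^ N * ∏ k : Fin N, ((Real.cos (2 * Real.pi * (k : ℕ) / N) : ℝ) : ℂ)
      = (-1) ^ (N + 1) * ((I ^ N - 1) * ((-I) ^ N - 1)) := by
  have h2cos (k : ℕ) : 2 * ((Real.cos (2 * Real.pi * k / N) : ℝ) : ℂ)
      = omegaN N ^ k + (omegaN N ^ k)⁻¹ := by
    rw [omegaN_pow, exp_mul_I_add_inv]
  rw [← Fin.prod_const, ← prod_mul_distrib]
  simp only [h2cos]
  rw [Fin.prod_univ_eq_prod_range (fun k => omegaN N ^ k + (omegaN N ^ k)⁻¹),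
    (isPrimitiveRoot_omegaN N).prod_range_pow_add_inv (NeZero.pos N)]

section
variable {N : ℕ}

lemma pow_val_add {M : Type*} [Monoid M] {ζ : M} (hζ : ζ ^ N = 1) (a b : Fin N) :
    ζ ^ ((a + b : Fin N) : ℕ) = ζ ^ (a : ℕ) * ζ ^ (b : ℕ) := by
  rw [Fin.val_add, ← pow_eq_pow_mod _ hζ, pow_add]

variable [NeZero N]

lemma pow_val_add_one {M : Type*} [Monoid M] {ζ : M} (hζ : ζ ^ N = 1) (j : Fin N) :
    ζ ^ ((j + 1 : Fin N) : ℕ) = ζ ^ (j : ℕ) * ζ := by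
  rw [pow_val_add hζ, Fin.val_one', ← pow_eq_pow_mod _ hζ, pow_one]

lemma pow_val_sub_one {G : Type*} [GroupWithZero G] {ζ : G} (hζ : ζ ^ N = 1) (j : Fin N) :
    ζ ^ ((j - 1 : Fin N) : ℕ) = ζ ^ (j : ℕ) * ζ⁻¹ := by
  have hζ0 : ζ ≠ 0 := by
    rintro rfl
    exact zero_ne_one ((zero_pow (NeZero.ne N)).symm.trans hζ)
  rw [eq_mul_inv_iff_mul_eq₀ hζ0, ← pow_val_add_one hζ, sub_add_cancel]

lemma shiftX_apply (j k : Fin N) : shiftX N j k = if j = k + 1 then 1 else 0 := by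
  simp [shiftX, Fin.ext_iff, Fin.val_add]

lemma shiftX_mul_apply {o : Type*} (M : Matrix (Fin N) o ℂ) (j : Fin N) (k : o) :
    (shiftX N * M) j k = M (j - 1) k := by
  simp_rw [mul_apply, shiftX_apply, eq_comm (a := j), ← eq_sub_iff_add_eq]
  simp

lemma conjTranspose_shiftX_mul_apply {o : Type*} (M : Matrix (Fin N) o ℂ) (j : Fin N) (k : o) :
    ((shiftX N)ᴴ * M) j k = M (j + 1) k := by
  simp [mul_apply, shiftX_apply, apply_ite (starRingEnd ℂ)]

variable {ζ : ℂ}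

lemma shiftX_mul_vandermonde (hζ : ζ ^ N = 1) :
    shiftX N * vandermonde (fun j : Fin N => ζ ^ (j : ℕ))
      = vandermonde (fun j : Fin N => ζ ^ (j : ℕ)) *
          diagonal fun k : Fin N => (ζ ^ (k : ℕ))⁻¹ := by
  ext j k
  rw [shiftX_mul_apply, mul_diagonal, vandermonde_apply, vandermonde_apply, pow_val_sub_one hζ,
    mul_pow, inv_pow]

lemma conjTranspose_shiftX_mul_vandermonde (hζ : ζ ^ N = 1) :
    (shiftX N)ᴴ * vandermonde (fun j : Fin N => ζ ^ (j : ℕ))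
      = vandermonde (fun j : Fin N => ζ ^ (j : ℕ)) *
          diagonal fun k : Fin N => ζ ^ (k : ℕ) := by
  ext j k
  rw [conjTranspose_shiftX_mul_apply, mul_diagonal, vandermonde_apply, vandermonde_apply,
    pow_val_add_one hζ, mul_pow]

lemma harper_eps_zero_mul_vandermonde (a b : ℝ) (hζ : ζ ^ N = 1) :
    harper N a b 0 * vandermonde (fun j : Fin N => ζ ^ (j : ℕ))
      = vandermonde (fun j : Fin N => ζ ^ (j : ℕ)) * diagonal fun k : Fin N =>
          a / 2 * exp (b * I) * (ζ ^ (k : ℕ))⁻¹ + a / 2 * exp (-b * I) * ζ ^ (k : ℕ) := by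
  simp only [harper, ofReal_zero, zero_div, zero_smul, add_zero, add_mul, smul_mul,
    shiftX_mul_vandermonde hζ, conjTranspose_shiftX_mul_vandermonde hζ]
  ext j k
  simp [mul_diagonal]
  ring

theorem det_harper_eps_zero (a b : ℝ) :
    det (harper N a b 0)
      = ∏ k : Fin N, ((a * Real.cos (2 * Real.pi * (k : ℕ) / N - b) : ℝ) : ℂ) := by
  have hω := isPrimitiveRoot_omegaN N
  have hV : det (vandermonde fun j : Fin N => omegaN N ^ (j : ℕ)) ≠ 0 :=
    det_vandermonde_ne_zero_iff.2 fun i j h => Fin.ext (hω.pow_inj i.isLt j.isLt h)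
  have h := congrArg det (harper_eps_zero_mul_vandermonde a b hω.pow_eq_one)
  rw [det_mul, det_mul, det_diagonal, mul_comm] at h
  refine (mul_left_cancel₀ hV h).trans (prod_congr rfl fun k _ => ?_)
  rw [omegaN_pow]
  set θ : ℝ := 2 * Real.pi * (k : ℕ) / N
  have hw : exp (-b * I) * exp (θ * I) = exp (↑(θ - b) * I) := by
    rw [← exp_add]; push_cast; ring_nf
  calc _ = a / 2 * ((exp (-b * I) * exp (θ * I))⁻¹ + exp (-b * I) * exp (θ * I)) := by
        rw [mul_inv, ← exp_neg (-b * I), neg_mul, neg_neg]; ring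
    _ = _ := by rw [hw, add_comm, exp_mul_I_add_inv]; push_cast; ring

end

/-- The determinant of `h(1, 0, 0) = (X + Xᴴ)/2` equals the product of the cosines
`∏_{j} cos(2πj/N)`, which is `0` if `N ≡ 0 (mod 4)`, `2^(1−N)` if `N` is odd, and
`−2^(2−N)` if `N ≡ 2 (mod 4)`. -/
theorem harper_det_eps_zero (N : ℕ) (hN : 2 ≤ N) :
    Matrix.det (harper N 1 0 0) = ∏ j : Fin N, ((Real.cos (2 * Real.pi * (j : ℕ) / N) : ℝ) : ℂ)
      ∧ Matrix.det (harper N 1 0 0)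
          = if N % 4 = 0 then 0
            else if N % 2 = 1 then (2 : ℂ) ^ (1 - (N : ℤ))
            else -(2 : ℂ) ^ (2 - (N : ℤ)) := by
  have : NeZero N := ⟨by omega⟩
  have hdet : Matrix.det (harper N 1 0 0)
      = ∏ j : Fin N, ((Real.cos (2 * Real.pi * (j : ℕ) / N) : ℝ) : ℂ) := by
    simp [det_harper_eps_zero]
  refine ⟨hdet, ?_⟩
  have h := two_pow_mul_prod_cos_two_pi_mul_div N
  rw [neg_one_pow_succ_mul_I_pow_sub_one_mul_neg_I_pow_sub_one, ← hdet,
    ← eq_inv_mul_iff_mul_eq₀ (pow_ne_zero N two_ne_zero)] at h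
  rw [h, zpow_sub₀ two_ne_zero, zpow_sub₀ two_ne_zero, zpow_natCast]
  split_ifs <;> norm_num [div_eq_inv_mul]
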